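/- arXiv:2308.07385 — 3 statements merged into one kernel-verified Lean document; each statement's English description precedes it below -/
import Mathlib

section
/- Let Y be a metric space and X a reflexive Banach space. Let A : X × Y → X* satisfy: (i) for each y ∈ Y, A(·,y) is radially continuous and strictly monotone; (ii) for each u ∈ X, A(u,·) : Y → X* is continuous; (iii) for every y₀ ∈ Y there exists an open neighbourhood V of y₀ and a coercive function ρ : [0,∞) → ℝ (i.e., ρ(t) → ∞ as t → ∞) such that ⟨A(u,y), u⟩ ≥ ρ(‖u‖)·‖u‖ for all y ∈ V and u ∈ X. Then for every y ∈ Y there exists a unique u_y ∈ X with A(u_y, y) = 0, and if y_n → y in Y then u_{y_n} ⇀ u_y weakly in X. -/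
open Filter Topology Set Metric Matrix

/-!
For a fixed parameter this is the Browder–Minty theorem. Given finitely many points `wᵢ`,
monotonicity says that `bᵢⱼ = ⟨B wᵢ, wⱼ - wᵢ⟩` satisfies `b + bᵀ ≤ 0`, and separating the
nonpositive orthant from `b` applied to the simplex produces a convex combination `u` of the `wᵢ`
with `⟨B wᵢ, u⟩ ≤ ⟨B wᵢ, wᵢ⟩` for all `i`. Balls are weakly compact (reflexivity and
Banach–Alaoglu), so these finite solutions give `u` in a ball with `⟨B w, u⟩ ≤ ⟨B w, w⟩` for every
`w` of the ball. Minty's trick (radial continuity along the segment from `u` to `w`) turns this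
into `⟨B u, u⟩ ≤ ⟨B u, w⟩`; coercivity puts `u` in the interior of a large ball, so `B u = 0`.
Strict monotonicity gives uniqueness.

Near `y` the solutions stay in a fixed ball. Passing to the limit in `⟨A(w, y'), w - u_{y'}⟩ ≥ 0`,
every weak cluster point of `u_{y'}` as `y' → y` satisfies Minty's inequality for `A(·, y)`, hence
equals `u_y`; weak compactness of the ball then gives weak convergence.
-/

theorem Matrix.dotProduct_mulVec_self_nonpos {ι : Type*} [Fintype ι] {b : Matrix ι ι ℝ}
    (hb : ∀ i j, b i j + b j i ≤ 0) {x : ι → ℝ} (hx : 0 ≤ x) : x ⬝ᵥ b *ᵥ x ≤ 0 := by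
  have h2 : 2 * (x ⬝ᵥ b *ᵥ x) = x ⬝ᵥ (b + bᵀ) *ᵥ x := by
    rw [add_mulVec, dotProduct_add, two_mul, dotProduct_mulVec x bᵀ, vecMul_transpose,
      dotProduct_comm]
  have : x ⬝ᵥ (b + bᵀ) *ᵥ x ≤ 0 := by
    simp only [dotProduct, mulVec, Finset.mul_sum]
    exact Finset.sum_nonpos fun i _ => Finset.sum_nonpos fun j _ =>
      mul_nonpos_of_nonneg_of_nonpos (hx i) (mul_nonpos_of_nonpos_of_nonneg (hb i j) (hx j))
  linarith

theorem LinearMap.nonpos_of_forall_smul_lt {E : Type*} [AddCommGroup E] [Module ℝ E]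
    (f : E →ₗ[ℝ] ℝ) {x : E} {u : ℝ} (h : ∀ t : ℝ, 0 < t → f (t • x) < u) :
    f x ≤ 0 := by
  by_contra! hx
  obtain ⟨t, htu, ht⟩ :=
    (((tendsto_id.atTop_mul_const hx).eventually_gt_atTop u).and (eventually_gt_atTop 0)).exists
  exact (h t ht).not_gt (by simpa using htu)

theorem Matrix.exists_mem_stdSimplex_mulVec_nonpos {ι : Type*} [Fintype ι] [Nonempty ι]
    {b : Matrix ι ι ℝ} (hb : ∀ i j, b i j + b j i ≤ 0) :
    ∃ l ∈ stdSimplex ℝ ι, b *ᵥ l ≤ 0 := by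
  classical
  by_contra! hpos
  have hdisj : Disjoint (Iic 0) (b.mulVecLin '' stdSimplex ℝ ι) := by
    rw [Set.disjoint_right]
    rintro _ ⟨l, hl, rfl⟩
    exact hpos l hl
  obtain ⟨f, u, v, hfC, huv, hfK⟩ := geometric_hahn_banach_closed_compact (convex_Iic 0)
    isClosed_Iic ((convex_stdSimplex ℝ ι).linear_image _)
    ((isCompact_stdSimplex ℝ ι).image b.mulVecLin.continuous_of_finiteDimensional) hdisj
  set φ : ι → ℝ := fun i => f (Pi.single i 1)
  have hf : ∀ x, f x = φ ⬝ᵥ x := fun x => by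
    conv_lhs => rw [← Finset.univ_sum_single x]
    simp only [map_sum, dotProduct]
    refine Finset.sum_congr rfl fun i _ => ?_
    rw [mul_comm, ← smul_eq_mul, ← map_smul, ← Pi.single_smul', smul_eq_mul, mul_one]
  have hφ : 0 ≤ φ := fun i => by
    have hi : -Pi.single i 1 ≤ (0 : ι → ℝ) := neg_nonpos.2 (Pi.single_nonneg.2 zero_le_one)
    simpa [φ] using (f : (ι → ℝ) →ₗ[ℝ] ℝ).nonpos_of_forall_smul_lt fun t ht =>
      hfC _ (smul_nonpos_of_nonneg_of_nonpos ht.le hi)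
  have hu : 0 < u := by simpa using hfC 0 (mem_Iic.2 le_rfl)
  have hs : 0 < ∑ i, φ i := by
    refine (Finset.sum_nonneg fun i _ => hφ i).lt_of_ne fun h => ?_
    have hφ0 : φ = 0 := funext fun i =>
      (Finset.sum_eq_zero_iff_of_nonneg fun i _ => hφ i).1 h.symm i (Finset.mem_univ i)
    have := hfK _ ⟨_, single_mem_stdSimplex ℝ (Classical.arbitrary ι), rfl⟩
    rw [hf, hφ0, zero_dotProduct] at this
    linarith
  set μ := (∑ i, φ i)⁻¹ • φ
  have hμ : μ ∈ stdSimplex ℝ ι :=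
    ⟨fun i => mul_nonneg (inv_nonneg.2 hs.le) (hφ i), by simp [μ, ← Finset.mul_sum, hs.ne']⟩
  have := hfK _ ⟨μ, hμ, rfl⟩
  rw [mulVecLin_apply, hf, mulVec_smul, dotProduct_smul, smul_eq_mul] at this
  have := mul_nonpos_of_nonneg_of_nonpos (inv_nonneg.2 hs.le)
    (dotProduct_mulVec_self_nonpos hb hφ)
  linarith

theorem Filter.Tendsto.exists_forall_mul_nonpos_lt {ρ : ℝ → ℝ}
    (hρ : Tendsto ρ atTop atTop) : ∃ R, ∀ r, ρ r * r ≤ 0 → r < R := by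
  obtain ⟨R, hR⟩ := eventually_atTop.1 ((hρ.eventually_gt_atTop 0).and (eventually_gt_atTop 0))
  exact ⟨R, fun r hr => not_le.1 fun h => (mul_pos (hR r h).1 (hR r h).2).not_ge hr⟩

section MonotoneOperator

variable {X : Type*} [NormedAddCommGroup X] [NormedSpace ℝ X]

def IsRadiallyContinuous (B : X → StrongDual ℝ X) : Prop :=
  ∀ u w : X, ContinuousOn (fun t : ℝ => B (u + t • w) w) (Icc 0 1)

def IsMonotoneOperator (B : X → StrongDual ℝ X) : Prop :=
  ∀ u w : X, 0 ≤ (B u - B w) (u - w)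

def IsStrictlyMonotoneOperator (B : X → StrongDual ℝ X) : Prop :=
  ∀ u w : X, u ≠ w → 0 < (B u - B w) (u - w)

variable {B : X → StrongDual ℝ X}

theorem IsStrictlyMonotoneOperator.isMonotoneOperator (hB : IsStrictlyMonotoneOperator B) :
    IsMonotoneOperator B := fun u w => by
  rcases eq_or_ne u w with rfl | h
  · simp
  · exact (hB u w h).le

theorem IsStrictlyMonotoneOperator.injective (hB : IsStrictlyMonotoneOperator B) :
    Function.Injective B := fun u w h => by
  by_contra hne
  simpa [h] using hB u w hne

theorem IsRadiallyContinuous.nonneg_of_forall_Ioc (hB : IsRadiallyContinuous B) {u v : X}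
    (h : ∀ t ∈ Ioc (0 : ℝ) 1, 0 ≤ B (u + t • v) v) : 0 ≤ B u v := by
  have hlim : Tendsto (fun t : ℝ => B (u + t • v) v) (𝓝[Ioc 0 1] 0) (𝓝 (B u v)) := by
    simpa using ((hB u v) 0 (left_mem_Icc.2 zero_le_one)).tendsto.mono_left
      (nhdsWithin_mono _ Ioc_subset_Icc_self)
  have := left_nhdsWithin_Ioc_neBot (zero_lt_one' ℝ)
  exact ge_of_tendsto hlim (eventually_nhdsWithin_of_forall h)

theorem IsRadiallyContinuous.minty (hB : IsRadiallyContinuous B) {s : Set X} (hs : Convex ℝ s)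
    {u : X} (hu : u ∈ s) (h : ∀ w ∈ s, B w u ≤ B w w) : IsMinOn (B u) s u := fun w hw => by
  show B u u ≤ B u w
  rw [← sub_nonneg, ← map_sub]
  refine hB.nonneg_of_forall_Ioc fun t ht => ?_
  have hwt := h _ (hs.add_smul_sub_mem hu hw ⟨ht.1.le, ht.2⟩)
  rw [← sub_nonneg, ← map_sub, add_sub_cancel_left, map_smul, smul_eq_mul] at hwt
  exact nonneg_of_mul_nonneg_right hwt ht.1

theorem IsMonotoneOperator.exists_mem_forall_apply_le {ι : Type*} [Fintype ι]
    (hB : IsMonotoneOperator B) {s : Set X} (hs : Convex ℝ s) (hne : s.Nonempty) (w : ι → X)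
    (hw : ∀ i, w i ∈ s) : ∃ u ∈ s, ∀ i, B (w i) u ≤ B (w i) (w i) := by
  cases isEmpty_or_nonempty ι
  · obtain ⟨u, hu⟩ := hne
    exact ⟨u, hu, isEmptyElim⟩
  let b : Matrix ι ι ℝ := fun i j => B (w i) (w j - w i)
  obtain ⟨l, hl, hbl⟩ := exists_mem_stdSimplex_mulVec_nonpos (b := b) fun i j => by
    have := hB (w i) (w j)
    simp only [b, map_sub, _root_.sub_apply] at this ⊢
    linarith
  refine ⟨∑ j, l j • w j, hs.sum_mem (fun j _ => hl.1 j) hl.2 fun j _ => hw j, fun i => ?_⟩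
  have hbi : (b *ᵥ l) i = B (w i) (∑ j, l j • w j) - B (w i) (w i) := by
    simp only [b, mulVec, dotProduct, map_sum, map_smul, map_sub, smul_eq_mul, sub_mul,
      Finset.sum_sub_distrib, ← Finset.mul_sum, hl.2, mul_one, mul_comm (l _)]
  simpa [hbi] using hbl i

theorem isCompact_toWeakSpace_closedBall
    (hrefl : Function.Surjective (NormedSpace.inclusionInDoubleDual ℝ X)) (R : ℝ) :
    IsCompact (toWeakSpace ℝ X '' closedBall (0 : X) R) := by
  have := NormedSpace.isCompact_closure_of_isBounded ℝ X
    (toWeakSpace ℝ X '' closedBall (0 : X) R)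
    (by rw [(toWeakSpace ℝ X).injective.preimage_image]; exact isBounded_closedBall)
    fun φ _ => hrefl φ
  rwa [← (convex_closedBall (0 : X) R).toWeakSpace_closure (𝕜 := ℝ),
    isClosed_closedBall.closure_eq] at this

theorem IsMonotoneOperator.exists_mem_closedBall_forall_apply_le
    (hrefl : Function.Surjective (NormedSpace.inclusionInDoubleDual ℝ X))
    (hB : IsMonotoneOperator B) {R : ℝ} (hR : 0 ≤ R) :
    ∃ u ∈ closedBall (0 : X) R, ∀ w ∈ closedBall (0 : X) R, B w u ≤ B w w := by
  let Z : closedBall (0 : X) R → Set (WeakSpace ℝ X) :=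
    fun w => {x | B w ((toWeakSpace ℝ X).symm x) ≤ B w w}
  have hZ : ∀ w, IsClosed (Z w) := fun w =>
    isClosed_le (WeakBilin.eval_continuous _ (B w)) continuous_const
  obtain ⟨_, ⟨u, hu, rfl⟩, huZ⟩ :=
    (isCompact_toWeakSpace_closedBall hrefl R).inter_iInter_nonempty Z hZ fun F => by
      obtain ⟨u, hu, huF⟩ := hB.exists_mem_forall_apply_le (convex_closedBall 0 R)
        ⟨0, mem_closedBall_self hR⟩ (fun i : F => (i : closedBall (0 : X) R).1) fun i => i.1.2
      exact ⟨toWeakSpace ℝ X u, mem_image_of_mem _ hu, mem_iInter₂.2 fun w hw => huF ⟨w, hw⟩⟩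
  exact ⟨u, hu, fun w hw => mem_iInter.1 huZ ⟨w, hw⟩⟩

theorem IsMonotoneOperator.exists_eq_zero
    (hrefl : Function.Surjective (NormedSpace.inclusionInDoubleDual ℝ X))
    (hB : IsMonotoneOperator B) (hrad : IsRadiallyContinuous B) {ρ : ℝ → ℝ}
    (hρ : Tendsto ρ atTop atTop) (hcoer : ∀ u, ρ ‖u‖ * ‖u‖ ≤ B u u) : ∃ u, B u = 0 := by
  obtain ⟨R, hR⟩ := hρ.exists_forall_mul_nonpos_lt
  have hR0 : 0 < R := by simpa using hR 0
  obtain ⟨u, hu, hminty⟩ := hB.exists_mem_closedBall_forall_apply_le hrefl hR0.le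
  have hmin : IsMinOn (B u) (closedBall 0 R) u := hrad.minty (convex_closedBall 0 R) hu hminty
  have hnorm : ‖u‖ < R :=
    hR _ ((hcoer u).trans (by simpa using hmin (mem_closedBall_self hR0.le)))
  exact ⟨u, (hmin.isLocalMin (closedBall_mem_nhds_of_mem (mem_ball_zero_iff.2 hnorm))
    ).hasFDerivAt_eq_zero (B u).hasFDerivAt⟩

end MonotoneOperator

section Parametric

variable {X Y : Type*} [NormedAddCommGroup X] [NormedSpace ℝ X] [TopologicalSpace Y]
  {A : X → Y → StrongDual ℝ X} {S : Y → X} {y : Y}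

theorem apply_le_of_mapClusterPt_toWeakSpace (hmono : ∀ y, IsMonotoneOperator (A · y))
    (hcont : ∀ w, ContinuousAt (A w ·) y) (hS : ∀ y, A (S y) y = 0) {R : ℝ}
    (hbdd : ∀ᶠ y' in 𝓝 y, ‖S y'‖ ≤ R) {u : X}
    (hu : MapClusterPt (toWeakSpace ℝ X u) (𝓝 y) (fun y' => toWeakSpace ℝ X (S y'))) (w : X) :
    A w y u ≤ A w y w := by
  obtain ⟨U, hUy, hUu⟩ := mapClusterPt_iff_ultrafilter.1 hu
  have hAw : Tendsto (A w ·) U (𝓝 (A w y)) := (hcont w).tendsto.mono_left hUy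
  have hfar : Tendsto (fun y' => A w y' w) U (𝓝 (A w y w)) :=
    ((ContinuousLinearMap.apply ℝ ℝ w).continuous.tendsto _).comp hAw
  have hnear : Tendsto (fun y' => A w y (S y')) U (𝓝 (A w y u)) :=
    ((WeakBilin.eval_continuous _ (A w y)).tendsto _).comp hUu
  have herr : Tendsto (fun y' => (A w y' - A w y) (S y')) U (𝓝 0) :=
    (tendsto_sub_nhds_zero_iff.2 hAw).op_zero_isBoundedUnder_le
      (isBoundedUnder_of_eventually_le (hbdd.filter_mono hUy)) (fun L x => L x)
      fun L x => L.le_opNorm x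
  have hlim : Tendsto (fun y' => A w y' (w - S y')) U (𝓝 (A w y w - (0 + A w y u))) :=
    (hfar.sub (herr.add hnear)).congr fun y' => by simp [map_sub]
  have hnonneg : ∀ y', 0 ≤ A w y' (w - S y') := fun y' => by
    simpa [hS y'] using hmono y' w (S y')
  linarith [ge_of_tendsto' hlim hnonneg]

theorem tendsto_toWeakSpace_of_forall_eq_zero
    (hrefl : Function.Surjective (NormedSpace.inclusionInDoubleDual ℝ X))
    (hmono : ∀ y, IsMonotoneOperator (A · y)) (hinj : Function.Injective (A · y))
    (hrad : IsRadiallyContinuous (A · y)) (hcont : ∀ w, ContinuousAt (A w ·) y)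
    (hS : ∀ y, A (S y) y = 0) {R : ℝ} (hbdd : ∀ᶠ y' in 𝓝 y, ‖S y'‖ ≤ R) :
    Tendsto (fun y' => toWeakSpace ℝ X (S y')) (𝓝 y) (𝓝 (toWeakSpace ℝ X (S y))) := by
  refine (isCompact_toWeakSpace_closedBall hrefl R).tendsto_nhds_of_unique_mapClusterPt
    (hbdd.mono fun y' h => mem_image_of_mem _ (mem_closedBall_zero_iff.2 h)) ?_
  rintro _ ⟨u, -, rfl⟩ hu
  have hmin : IsMinOn (A u y) univ u := hrad.minty convex_univ (mem_univ u) fun w _ =>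
    apply_le_of_mapClusterPt_toWeakSpace hmono hcont hS hbdd hu w
  have hu0 : A u y = 0 := (hmin.isLocalMin univ_mem).hasFDerivAt_eq_zero (A u y).hasFDerivAt
  rw [hinj (hu0.trans (hS y).symm)]

end Parametric

theorem parametric_browder_minty_general
    {X : Type*} [NormedAddCommGroup X] [NormedSpace ℝ X]
    (hrefl : Function.Surjective (NormedSpace.inclusionInDoubleDual ℝ X))
    {Y : Type*} [MetricSpace Y]
    (A : X → Y → StrongDual ℝ X)
    -- radial continuity of A(·,y)
    (hrad : ∀ (y : Y) (u w : X),
      ContinuousOn (fun t : ℝ => A (u + t • w) y w) (Set.Icc (0 : ℝ) 1))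
    -- strict monotonicity of A(·,y)
    (hmono : ∀ (y : Y) (u w : X), u ≠ w → 0 < (A u y - A w y) (u - w))
    -- continuity of A(u,·)
    (hcont : ∀ u : X, Continuous fun y : Y => A u y)
    -- local (in the parameter) uniform coercivity
    (hcoer : ∀ y₀ : Y, ∃ V : Set Y, IsOpen V ∧ y₀ ∈ V ∧
      ∃ ρ : ℝ → ℝ, Tendsto ρ atTop atTop ∧
        ∀ y ∈ V, ∀ u : X, A u y u ≥ ρ ‖u‖ * ‖u‖) :
    (∀ y : Y, ∃! u : X, A u y = 0) ∧
    ∀ S : Y → X, (∀ y : Y, A (S y) y = 0) →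
      ∀ (yseq : ℕ → Y) (y : Y), Tendsto yseq atTop (𝓝 y) →
        ∀ f : StrongDual ℝ X,
          Tendsto (fun n => f (S (yseq n))) atTop (𝓝 (f (S y))) := by
  have hstrict : ∀ y, IsStrictlyMonotoneOperator (A · y) := hmono
  have hmono' : ∀ y, IsMonotoneOperator (A · y) := fun y => (hstrict y).isMonotoneOperator
  refine ⟨fun y => ?_, fun S hS yseq y hy f => ?_⟩
  · obtain ⟨V, -, hyV, ρ, hρ, hcoerV⟩ := hcoer y
    obtain ⟨u, hu⟩ := (hmono' y).exists_eq_zero hrefl (hrad y) hρ (hcoerV y hyV)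
    exact ⟨u, hu, fun w hw => (hstrict y).injective (hw.trans hu.symm)⟩
  · obtain ⟨V, hV, hyV, ρ, hρ, hcoerV⟩ := hcoer y
    obtain ⟨R, hR⟩ := hρ.exists_forall_mul_nonpos_lt
    have hbdd : ∀ᶠ y' in 𝓝 y, ‖S y'‖ ≤ R :=
      eventually_of_mem (hV.mem_nhds hyV) fun y' hy' =>
        (hR _ (by simpa [hS y'] using hcoerV y' hy' (S y'))).le
    have hweak := tendsto_toWeakSpace_of_forall_eq_zero hrefl hmono' (hstrict y).injective
      (hrad y) (fun w => (hcont w).continuousAt) hS hbdd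
    exact ((WeakBilin.eval_continuous _ f).tendsto _).comp (hweak.comp hy)

/-- Parametric version of the Browder–Minty theorem. -/
theorem parametric_browder_minty
    {X : Type*} [NormedAddCommGroup X] [NormedSpace ℝ X] [CompleteSpace X]
    (hrefl : Function.Surjective (NormedSpace.inclusionInDoubleDual ℝ X))
    {Y : Type*} [MetricSpace Y]
    (A : X → Y → StrongDual ℝ X)
    -- radial continuity of A(·,y)
    (hrad : ∀ (y : Y) (u w : X),
      ContinuousOn (fun t : ℝ => A (u + t • w) y w) (Set.Icc (0 : ℝ) 1))
    -- strict monotonicity of A(·,y)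
    (hmono : ∀ (y : Y) (u w : X), u ≠ w → 0 < (A u y - A w y) (u - w))
    -- continuity of A(u,·)
    (hcont : ∀ u : X, Continuous fun y : Y => A u y)
    -- local (in the parameter) uniform coercivity
    (hcoer : ∀ y₀ : Y, ∃ V : Set Y, IsOpen V ∧ y₀ ∈ V ∧
      ∃ ρ : ℝ → ℝ, Tendsto ρ atTop atTop ∧
        ∀ y ∈ V, ∀ u : X, A u y u ≥ ρ ‖u‖ * ‖u‖) :
    (∀ y : Y, ∃! u : X, A u y = 0) ∧
    ∀ S : Y → X, (∀ y : Y, A (S y) y = 0) →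
      ∀ (yseq : ℕ → Y) (y : Y), Tendsto yseq atTop (𝓝 y) →
        ∀ f : StrongDual ℝ X,
          Tendsto (fun n => f (S (yseq n))) atTop (𝓝 (f (S y))) :=
  parametric_browder_minty_general hrefl A hrad hmono hcont hcoer
end

section
/- Let Y be a metric space and X a reflexive Banach space. Let F : X × Y → X* satisfy: F(·,y) is radially continuous for all y ∈ Y; F(u,·) is continuous for all u ∈ X; and there exists m > 0 such that ⟨F(u,y) − F(w,y), u − w⟩ ≥ m·‖u − w‖² for all y ∈ Y and u, w ∈ X. Then for every y ∈ Y there is a unique u_y with F(u_y, y) = 0, and y_n → y implies u_{y_n} → u_y strongly in X. -/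
/-!
Strong monotonicity gives uniqueness of the zero `u_y` of `F(·, y)` and the estimate
`m ‖u_{y_n} - u_y‖ ≤ ‖F(u_y, y_n)‖`, which tends to `0` by continuity of `F(u_y, ·)`.

Existence is the Browder–Minty argument. In finite dimensions a radially continuous monotone
map is continuous; its mollifications are `C¹` and strongly monotone, hence surjective: the range
is open by the inverse function theorem and closed because strong monotonicity makes the map
antilipschitz. Their zeros stay bounded and a limit point is a zero by Minty's trick. In a
reflexive space the Galerkin solutions on finite-dimensional subspaces lie in the ball of radius
`‖A 0‖ / m`, so by Banach–Alaoglu the weak-* closed sets `{Φ | Φ (A v) ≤ A v v}` of the bidual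
meet inside that ball; reflexivity turns the common point into some `u` with `A v (v - u) ≥ 0`
for all `v`, and Minty's trick gives `A u = 0`.
-/

open Filter Topology Set MeasureTheory
open ContinuousLinearMap (lsmul lsmul_apply)
open scoped Convolution

theorem Filter.Tendsto.clm_apply {ι 𝕜 E F : Type*} [NontriviallyNormedField 𝕜]
    [NormedAddCommGroup E] [NormedSpace 𝕜 E] [NormedAddCommGroup F] [NormedSpace 𝕜 F]
    {l : Filter ι} {f : ι → E →L[𝕜] F} {x : ι → E} {f₀ : E →L[𝕜] F} {x₀ : E}
    (hf : Tendsto f l (𝓝 f₀)) (hx : Tendsto x l (𝓝 x₀)) :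
    Tendsto (fun i => f i (x i)) l (𝓝 (f₀ x₀)) :=
  (isBoundedBilinearMap_apply.continuous.tendsto (f₀, x₀)).comp (hf.prodMk_nhds hx)

section MonotoneOperator

variable {E : Type*} [NormedAddCommGroup E] [NormedSpace ℝ E]

def MonotoneOp (A : E → StrongDual ℝ E) : Prop :=
  ∀ u w, 0 ≤ (A u - A w) (u - w)

def StronglyMonotoneOp (m : ℝ) (A : E → StrongDual ℝ E) : Prop :=
  ∀ u w, m * ‖u - w‖ ^ 2 ≤ (A u - A w) (u - w)

def RadiallyContinuous (A : E → StrongDual ℝ E) : Prop :=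
  ∀ u w, ContinuousOn (fun t : ℝ => A (u + t • w) w) (Icc 0 1)

theorem ContinuousLinearMap.eq_zero_of_forall_nonneg {f : StrongDual ℝ E} (h : ∀ w, 0 ≤ f w) :
    f = 0 := by
  ext w
  have := h (-w)
  rw [map_neg, neg_nonneg] at this
  exact le_antisymm this (h w)

variable {A : E → StrongDual ℝ E} {m : ℝ}

theorem StronglyMonotoneOp.monotoneOp (hA : StronglyMonotoneOp m A) (hm : 0 ≤ m) :
    MonotoneOp A :=
  fun u w => (by positivity : 0 ≤ m * ‖u - w‖ ^ 2).trans (hA u w)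

theorem StronglyMonotoneOp.mul_norm_sub_le (hA : StronglyMonotoneOp m A) (u w : E) :
    m * ‖u - w‖ ≤ ‖A u - A w‖ := by
  rcases (norm_nonneg (u - w)).eq_or_lt with h | h
  · rw [← h, mul_zero]
    exact norm_nonneg _
  · refine le_of_mul_le_mul_right ?_ h
    calc m * ‖u - w‖ * ‖u - w‖ = m * ‖u - w‖ ^ 2 := by ring
      _ ≤ (A u - A w) (u - w) := hA u w
      _ ≤ ‖A u - A w‖ * ‖u - w‖ := (le_abs_self _).trans ((A u - A w).le_opNorm _)

theorem StronglyMonotoneOp.antilipschitz (hA : StronglyMonotoneOp m A) (hm : 0 < m) :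
    AntilipschitzWith (Real.toNNReal m⁻¹) A := by
  refine AntilipschitzWith.of_le_mul_dist fun u w => ?_
  rw [Real.coe_toNNReal _ (inv_nonneg.2 hm.le), dist_eq_norm, dist_eq_norm, le_inv_mul_iff₀ hm]
  exact hA.mul_norm_sub_le u w

theorem RadiallyContinuous.tendsto_nhdsGT (hA : RadiallyContinuous A) (u w : E) :
    Tendsto (fun t : ℝ => A (u + t • w) w) (𝓝[>] 0) (𝓝 (A u w)) := by
  have h := hA u w 0 (left_mem_Icc.2 zero_le_one)
  simp only [ContinuousWithinAt, zero_smul, add_zero] at h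
  rw [← nhdsWithin_Ioc_eq_nhdsGT one_pos]
  exact h.mono_left (nhdsWithin_mono _ Ioc_subset_Icc_self)

-- Minty's trick: test the hypothesis at `v = u + t • w` and let `t → 0⁺`.
theorem RadiallyContinuous.eq_of_forall_nonneg (hA : RadiallyContinuous A) {u : E}
    {g : StrongDual ℝ E} (h : ∀ v, 0 ≤ (A v - g) (v - u)) : A u = g := by
  refine sub_eq_zero.1 (ContinuousLinearMap.eq_zero_of_forall_nonneg fun w => ?_)
  have hle : ∀ᶠ t in 𝓝[>] (0 : ℝ), g w ≤ A (u + t • w) w := by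
    filter_upwards [self_mem_nhdsWithin] with t (ht : 0 < t)
    have := h (u + t • w)
    rw [add_sub_cancel_left, map_smul, smul_eq_mul, sub_apply] at this
    nlinarith
  simpa using ge_of_tendsto (hA.tendsto_nhdsGT u w) hle

theorem tendsto_of_uniformly_stronglyMonotoneOp {ι : Type*} {l : Filter ι}
    {A : ι → E → StrongDual ℝ E} (hm : 0 < m) (hA : ∀ i, StronglyMonotoneOp m (A i))
    {u : ι → E} (hu : ∀ i, A i (u i) = 0) {x : E} (hx : Tendsto (fun i => A i x) l (𝓝 0)) :
    Tendsto u l (𝓝 x) := by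
  rw [tendsto_iff_norm_sub_tendsto_zero]
  refine squeeze_zero (fun _ => norm_nonneg _) (fun i => ?_) ((hx.norm.div_const m).trans_eq ?_)
  · rw [le_div_iff₀ hm, mul_comm, ← norm_neg (A i x), ← zero_sub, ← hu i]
    exact (hA i).mul_norm_sub_le _ _
  · simp

theorem StronglyMonotoneOp.derivative (hA : StronglyMonotoneOp m A)
    {A' : E →L[ℝ] StrongDual ℝ E} {x : E} (hA' : HasFDerivAt A A' x) :
    StronglyMonotoneOp m A' := by
  intro u v
  rw [← map_sub]
  set w := u - v
  have hline : HasDerivAt (fun t : ℝ => A (x + t • w) w) (A' w w) 0 := by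
    have hx : HasFDerivAt A A' (x + (0 : ℝ) • w) := by simpa using hA'
    have hcurve : HasDerivAt (fun t : ℝ => A (x + t • w)) (A' w) 0 :=
      (hx.comp_hasDerivAt 0 (((hasDerivAt_id (0 : ℝ)).smul_const w).const_add x)).congr_deriv
        (by simp)
    exact (ContinuousLinearMap.apply ℝ ℝ w).hasFDerivAt.comp_hasDerivAt (0 : ℝ) hcurve
  refine ge_of_tendsto hline.tendsto_slope_zero_right ?_
  filter_upwards [self_mem_nhdsWithin] with t (ht : 0 < t)
  have := hA (x + t • w) x
  rw [add_sub_cancel_left, map_smul, smul_eq_mul, norm_smul, Real.norm_of_nonneg ht.le,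
    sub_apply] at this
  rw [zero_add, zero_smul, add_zero, smul_eq_mul, le_inv_mul_iff₀ ht]
  nlinarith

section FiniteDimensional

variable [FiniteDimensional ℝ E]

theorem MonotoneOp.not_tendsto_norm_atTop (hA : MonotoneOp A) {x : ℕ → E} {x₀ : E}
    (hx : Tendsto x atTop (𝓝 x₀)) : ¬Tendsto (fun k => ‖A (x k)‖) atTop atTop := by
  intro hinf
  set y : ℕ → StrongDual ℝ E := fun k => ‖A (x k)‖⁻¹ • A (x k)
  obtain ⟨g, -, φ, hφ, hyg⟩ :=
    tendsto_subseq_of_bounded (Metric.isBounded_closedBall (x := 0) (r := 1)) (x := y) fun k => by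
      rcases eq_or_ne (A (x k)) 0 with h | h <;> simp [y, h, norm_smul]
  have hφinf := hinf.comp hφ.tendsto_atTop
  have hg : ‖g‖ = 1 := by
    refine tendsto_nhds_unique hyg.norm (tendsto_const_nhds.congr' ?_)
    filter_upwards [hφinf.eventually_gt_atTop 0] with k hk
    simp only [Function.comp_apply, y, norm_smul, norm_inv, norm_norm] at hk ⊢
    exact (inv_mul_cancel₀ hk.ne').symm
  -- dividing monotonicity by `‖A (x k)‖ → ∞` leaves `g (x₀ - v) ≥ 0` in the limit
  have hgnonneg : ∀ v, 0 ≤ g (x₀ - v) := by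
    intro v
    have hxφ := (hx.comp hφ.tendsto_atTop).sub (tendsto_const_nhds (x := v))
    refine le_of_tendsto_of_tendsto (f := fun k => ‖A (x (φ k))‖⁻¹ * A v (x (φ k) - v)) ?_
      (hyg.clm_apply hxφ) (Eventually.of_forall fun k => ?_)
    · simpa using (tendsto_inv_atTop_zero.comp hφinf).mul
        ((tendsto_const_nhds (x := A v)).clm_apply hxφ)
    · have := hA (x (φ k)) v
      simp only [sub_apply] at this
      simpa [y, smul_sub] using
        mul_le_mul_of_nonneg_left (by linarith : A v (x (φ k) - v) ≤ A (x (φ k)) (x (φ k) - v))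
          (inv_nonneg.2 (norm_nonneg (A (x (φ k)))))
  have := ContinuousLinearMap.eq_zero_of_forall_nonneg fun w => by simpa using hgnonneg (x₀ - w)
  simp [this] at hg

theorem MonotoneOp.continuous (hA : MonotoneOp A) (hrad : RadiallyContinuous A) :
    Continuous A := by
  refine continuous_iff_seqContinuous.2 fun x x₀ hx => tendsto_of_subseq_tendsto fun ns hns => ?_
  have hxns := hx.comp hns
  obtain ⟨C, hC⟩ : ∃ C, ∃ᶠ k in atTop, ‖A (x (ns k))‖ < C := by
    simpa only [tendsto_atTop, not_forall, Filter.not_eventually, not_le, Function.comp_apply] using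
      hA.not_tendsto_norm_atTop hxns
  obtain ⟨g, -, φ, hφ, hg⟩ := tendsto_subseq_of_frequently_bounded
    (Metric.isBounded_closedBall (x := 0) (r := C))
    (hC.mono fun k hk => mem_closedBall_zero_iff.2 hk.le)
  refine ⟨φ, (hrad.eq_of_forall_nonneg fun v => ?_).symm ▸ hg⟩
  exact ge_of_tendsto ((tendsto_const_nhds.sub hg).clm_apply
    (tendsto_const_nhds.sub (hxns.comp hφ.tendsto_atTop))) (Eventually.of_forall fun k => hA _ _)

theorem StronglyMonotoneOp.surjective_of_contDiff (hA : StronglyMonotoneOp m A) (hm : 0 < m)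
    (hsmooth : ContDiff ℝ 1 A) : Function.Surjective A := by
  have hfinrank : Module.finrank ℝ E = Module.finrank ℝ (StrongDual ℝ E) :=
    Subspace.dual_finrank_eq.symm.trans LinearMap.toContinuousLinearMap.finrank_eq
  have hderiv_surj : ∀ x, Function.Surjective (fderiv ℝ A x) := fun x =>
    (LinearMap.injective_iff_surjective_of_finrank_eq_finrank hfinrank
      (f := (fderiv ℝ A x).toLinearMap)).1 <|
    ((hA.derivative (hsmooth.differentiable one_ne_zero x).hasFDerivAt).antilipschitz hm).injective
  have hopen : IsOpen (range A) := (isOpenMap_iff_nhds_le.2 fun x =>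
    ((hsmooth.contDiffAt.hasStrictFDerivAt one_ne_zero).map_nhds_eq_of_surj
      (LinearMap.range_eq_top.2 (hderiv_surj x))).ge).isOpen_range
  have hclosed : IsClosed (range A) := by
    refine (isProperMap_iff_tendsto_cocompact.2 ⟨hsmooth.continuous, ?_⟩).isClosed_range
    simpa only [Metric.cobounded_eq_cocompact] using (hA.antilipschitz hm).tendsto_cobounded
  exact range_eq_univ.1 (IsClopen.eq_univ ⟨hclosed, hopen⟩ (range_nonempty A))

theorem StronglyMonotoneOp.convolution [MeasurableSpace E] [BorelSpace E]
    (μ : Measure E) [μ.IsAddHaarMeasure] (hA : StronglyMonotoneOp m A) (hcont : Continuous A)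
    (φ : ContDiffBump (0 : E)) : StronglyMonotoneOp m (φ.normed μ ⋆[lsmul ℝ ℝ, μ] A) := by
  intro x y
  have hint : ∀ z, Integrable (fun t => φ.normed μ t • A (z - t)) μ := fun z =>
    φ.hasCompactSupport_normed.convolutionExists_left (lsmul ℝ ℝ) φ.continuous_normed
      hcont.locallyIntegrable z
  have hdiff : Integrable (fun t => φ.normed μ t • (A (x - t) - A (y - t))) μ := by
    refine ((hint x).sub (hint y)).congr (ae_of_all _ fun t => ?_)
    simp [smul_sub]
  have hconv : (φ.normed μ ⋆[lsmul ℝ ℝ, μ] A) x - (φ.normed μ ⋆[lsmul ℝ ℝ, μ] A) y =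
      ∫ t, φ.normed μ t • (A (x - t) - A (y - t)) ∂μ := by
    simp only [convolution_def, lsmul_apply, smul_sub]
    exact (integral_sub (hint x) (hint y)).symm
  rw [hconv, ContinuousLinearMap.integral_apply hdiff]
  calc m * ‖x - y‖ ^ 2 = ∫ t, φ.normed μ t * (m * ‖x - y‖ ^ 2) ∂μ := by
        rw [integral_mul_const, φ.integral_normed, one_mul]
    _ ≤ ∫ t, (φ.normed μ t • (A (x - t) - A (y - t))) (x - y) ∂μ := by
      refine integral_mono (φ.integrable_normed.mul_const _) (hdiff.apply_continuousLinearMap _)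
        fun t => ?_
      rw [smul_apply, smul_eq_mul]
      refine mul_le_mul_of_nonneg_left ?_ (φ.nonneg_normed t)
      simpa using hA (x - t) (y - t)

theorem StronglyMonotoneOp.exists_eq_zero_of_finiteDimensional (hA : StronglyMonotoneOp m A)
    (hm : 0 < m) (hrad : RadiallyContinuous A) : ∃ u, A u = 0 := by
  borelize E
  have hcont : Continuous A := (hA.monotoneOp hm.le).continuous hrad
  set μ : Measure E := Measure.addHaar
  let φ : ℕ → ContDiffBump (0 : E) := fun k =>
    ⟨((k : ℝ) + 1)⁻¹ / 2, ((k : ℝ) + 1)⁻¹, by positivity, half_lt_self (by positivity)⟩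
  set G : ℕ → E → StrongDual ℝ E := fun k => (φ k).normed μ ⋆[lsmul ℝ ℝ, μ] A
  have hGmono : ∀ k, StronglyMonotoneOp m (G k) := fun k => hA.convolution μ hcont (φ k)
  have hφ : Tendsto (fun k => (φ k).rOut) atTop (𝓝 0) := by
    simpa only [one_div] using tendsto_one_div_add_atTop_nhds_zero_nat (𝕜 := ℝ)
  have hGlim : ∀ v, Tendsto (fun k => G k v) atTop (𝓝 (A v)) :=
    ContDiffBump.convolution_tendsto_right_of_continuous hφ hcont
  have hGsmooth : ∀ k, ContDiff ℝ 1 (G k) := fun k =>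
    (φ k).hasCompactSupport_normed.contDiff_convolution_left _ (φ k).contDiff_normed
      hcont.locallyIntegrable
  choose u hu using fun k => (hGmono k).surjective_of_contDiff hm (hGsmooth k) 0
  obtain ⟨C, hC⟩ := isBounded_iff_forall_norm_le.1 (Metric.isBounded_range_of_tendsto _ (hGlim 0))
  have hbound : ∀ k, u k ∈ Metric.closedBall 0 (C / m) := fun k => by
    rw [mem_closedBall_zero_iff, le_div_iff₀ hm, mul_comm]
    have := (hGmono k).mul_norm_sub_le (u k) 0
    rw [hu k, zero_sub, norm_neg, sub_zero] at this
    exact this.trans (hC _ (mem_range_self k))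
  obtain ⟨u₀, -, ψ, hψ, hu₀⟩ := tendsto_subseq_of_bounded Metric.isBounded_closedBall hbound
  refine ⟨u₀, hrad.eq_of_forall_nonneg fun v => ?_⟩
  refine ge_of_tendsto ((((hGlim v).comp hψ.tendsto_atTop).sub tendsto_const_nhds).clm_apply
    (tendsto_const_nhds.sub hu₀)) (Eventually.of_forall fun k => ?_)
  simpa [hu] using (hGmono (ψ k)).monotoneOp hm.le v (u (ψ k))

end FiniteDimensional

def opRestrict (V : Submodule ℝ E) (A : E → StrongDual ℝ E) : V → StrongDual ℝ V :=
  fun u => (A u).comp V.subtypeL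

theorem StronglyMonotoneOp.opRestrict (hA : StronglyMonotoneOp m A) (V : Submodule ℝ E) :
    StronglyMonotoneOp m (opRestrict V A) :=
  fun u w => hA u w

theorem RadiallyContinuous.opRestrict (hA : RadiallyContinuous A) (V : Submodule ℝ E) :
    RadiallyContinuous (opRestrict V A) :=
  fun u w => hA u w

theorem StronglyMonotoneOp.exists_galerkin (hA : StronglyMonotoneOp m A) (hm : 0 < m)
    (hrad : RadiallyContinuous A) (V : Submodule ℝ E) [FiniteDimensional ℝ V] :
    ∃ u ∈ V, m * ‖u‖ ≤ ‖A 0‖ ∧ ∀ z ∈ V, A u z = 0 := by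
  obtain ⟨u, hu⟩ := (hA.opRestrict V).exists_eq_zero_of_finiteDimensional hm (hrad.opRestrict V)
  refine ⟨u, u.2, ?_, fun z hz => DFunLike.congr_fun hu ⟨z, hz⟩⟩
  have := (hA.opRestrict V).mul_norm_sub_le u 0
  rw [hu, zero_sub, norm_neg, sub_zero] at this
  exact this.trans <|
    ContinuousLinearMap.opNorm_le_bound _ (norm_nonneg _) fun z => (A 0).le_opNorm z

theorem StronglyMonotoneOp.exists_eq_zero
    (hrefl : Function.Surjective (NormedSpace.inclusionInDoubleDual ℝ E))
    (hA : StronglyMonotoneOp m A) (hm : 0 < m) (hrad : RadiallyContinuous A) : ∃ u, A u = 0 := by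
  set J := NormedSpace.inclusionInDoubleDual ℝ E
  set R := ‖A 0‖ / m
  set Z : E → Set (WeakDual ℝ (StrongDual ℝ E)) := fun v => {Φ | Φ (A v) ≤ A v v}
  have hZ : ∀ v, IsClosed (Z v) := fun v =>
    isClosed_le (WeakDual.eval_continuous (A v)) continuous_const
  obtain ⟨Φ, -, hΦ⟩ := (WeakDual.isCompact_closedBall 0 R).inter_iInter_nonempty Z hZ
    fun t => by
      obtain ⟨u, hu, hnorm, hzero⟩ := hA.exists_galerkin hm hrad (Submodule.span ℝ t)
      refine ⟨StrongDual.toWeakDual (J u), ?_, mem_iInter₂.2 fun v hv => ?_⟩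
      · rw [mem_preimage, mem_closedBall_zero_iff]
        refine (NormedSpace.double_dual_bound ℝ E u).trans ?_
        rwa [le_div_iff₀ hm, mul_comm]
      · have hmono := hA.monotoneOp hm.le v u
        rwa [sub_apply, hzero _ (sub_mem (Submodule.subset_span hv) hu), sub_zero, map_sub,
          sub_nonneg] at hmono
  obtain ⟨u, hu⟩ := hrefl (WeakDual.toStrongDual Φ)
  refine ⟨u, hrad.eq_of_forall_nonneg fun v => ?_⟩
  rw [sub_zero, map_sub, sub_nonneg]
  exact (DFunLike.congr_fun hu (A v)).trans_le (mem_iInter.1 hΦ v)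

end MonotoneOperator

theorem parametric_strongly_monotone_general
    {X : Type*} [NormedAddCommGroup X] [NormedSpace ℝ X]
    (hrefl : Function.Surjective (NormedSpace.inclusionInDoubleDual ℝ X))
    {Y : Type*} [MetricSpace Y]
    (F : X → Y → StrongDual ℝ X)
    -- radial continuity of F(·,y)
    (hrad : ∀ (y : Y) (u w : X),
      ContinuousOn (fun t : ℝ => F (u + t • w) y w) (Set.Icc (0 : ℝ) 1))
    -- continuity of F(u,·)
    (hcont : ∀ u : X, Continuous fun y : Y => F u y)
    -- uniform strong monotonicity
    (m : ℝ) (hm : 0 < m)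
    (hmono : ∀ (y : Y) (u w : X), (F u y - F w y) (u - w) ≥ m * ‖u - w‖ ^ 2) :
    (∀ y : Y, ∃! u : X, F u y = 0) ∧
    ∀ S : Y → X, (∀ y : Y, F (S y) y = 0) →
      ∀ (yseq : ℕ → Y) (y : Y), Tendsto yseq atTop (𝓝 y) →
        Tendsto (fun n => S (yseq n)) atTop (𝓝 (S y)) := by
  have hA : ∀ y, StronglyMonotoneOp m (F · y) := fun y u w => hmono y u w
  refine ⟨fun y => ?_, fun S hS yseq y hy => ?_⟩
  · obtain ⟨u, hu⟩ := (hA y).exists_eq_zero hrefl hm (hrad y)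
    exact ⟨u, hu, fun w hw => ((hA y).antilipschitz hm).injective (hw.trans hu.symm)⟩
  · refine tendsto_of_uniformly_stronglyMonotoneOp hm (fun n => hA (yseq n))
      (fun n => hS (yseq n)) ?_
    simpa only [hS y, Function.comp_def] using ((hcont (S y)).tendsto y).comp hy

/-- Parametric strongly monotone principle. -/
theorem parametric_strongly_monotone
    {X : Type*} [NormedAddCommGroup X] [NormedSpace ℝ X] [CompleteSpace X]
    (hrefl : Function.Surjective (NormedSpace.inclusionInDoubleDual ℝ X))
    {Y : Type*} [MetricSpace Y]
    (F : X → Y → StrongDual ℝ X)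
    -- radial continuity of F(·,y)
    (hrad : ∀ (y : Y) (u w : X),
      ContinuousOn (fun t : ℝ => F (u + t • w) y w) (Set.Icc (0 : ℝ) 1))
    -- continuity of F(u,·)
    (hcont : ∀ u : X, Continuous fun y : Y => F u y)
    -- uniform strong monotonicity
    (m : ℝ) (hm : 0 < m)
    (hmono : ∀ (y : Y) (u w : X), (F u y - F w y) (u - w) ≥ m * ‖u - w‖ ^ 2) :
    (∀ y : Y, ∃! u : X, F u y = 0) ∧
    ∀ S : Y → X, (∀ y : Y, F (S y) y = 0) →
      ∀ (yseq : ℕ → Y) (y : Y), Tendsto yseq atTop (𝓝 y) →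
        Tendsto (fun n => S (yseq n)) atTop (𝓝 (S y)) :=
  parametric_strongly_monotone_general hrefl F hrad hcont m hm hmono
end

section
/- Let q > 1 and let ψ_q(ζ) = |ζ|^{q−2}ζ. Let g : [0,1] × ℝ² → ℝ and h₀, h₁ : ℝ → ℝ be continuous, and A₀, A₁ : [0,1] → ℝ of bounded variation. For every u, v ∈ C[0,1] there is exactly one c = c(u,v) ∈ ℝ such that ∫₀¹ ψ_q^{-1}( c − ∫₀^s g(τ, u(τ), v(τ)) dτ ) ds = ∫₀¹ h₁(v(s)) dA₁(s) − ∫₀¹ h₀(v(s)) dA₀(s); moreover the map (u,v) ↦ c(u,v) is continuous on C[0,1] × C[0,1]. -/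
/-!
For fixed `(u, v)`, write `G(s) = ∫₀ˢ g(τ, u, v) dτ`. The map `c ↦ ∫₀¹ ψ_q⁻¹(c - G s) ds` is
continuous, strictly increasing and squeezed between `ψ_q⁻¹(c ∓ ‖G‖∞)`, so it takes the value
`R(v) = ∫ h₁(v) dA₁ - ∫ h₀(v) dA₀` exactly once.

The Riemann–Stieltjes integrals exist because two Riemann–Stieltjes sums of mesh `δ` differ by
at most `ε · Var A` when `f` oscillates by at most `ε` on scale `2δ`: compare both with the sum
over the common refinement. Since `|∫ f dA - ∫ f' dA| ≤ ‖f - f'‖∞ · Var A`, the map `R` is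
continuous. Finally, the solution `c` of `F(x, c) = R(x)`, with `F` strictly increasing in `c`
and continuous in `x`, depends continuously on `x`.
-/

noncomputable section

open MeasureTheory Set Filter Bornology

/-- `I` is the Riemann–Stieltjes integral `∫₀¹ f dA`. -/
def IsRSIntegral (f A : ℝ → ℝ) (I : ℝ) : Prop :=
  ∀ ε > (0:ℝ), ∃ δ > (0:ℝ), ∀ (n : ℕ) (t ξ : ℕ → ℝ),
    0 < n → t 0 = 0 → t n = 1 →
    (∀ i < n, t i ≤ t (i+1) ∧ t (i+1) - t i ≤ δ ∧ ξ i ∈ Set.Icc (t i) (t (i+1))) →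
    |(∑ i ∈ Finset.range n, f (ξ i) * (A (t (i+1)) - A (t i))) - I| ≤ ε

/-- `ψ_q(ζ) = |ζ|^{q-2} ζ`. -/
def psiQ (q ζ : ℝ) : ℝ := |ζ| ^ (q - 2) * ζ

/-- `ψ_q⁻¹(η) = |η|^{(2-q)/(q-1)} η`. -/
def psiQInv (q η : ℝ) : ℝ := |η| ^ ((2 - q)/(q - 1)) * η

/-- The space `C[0,1]`. -/
abbrev C01 := C(Set.Icc (0:ℝ) 1, ℝ)

/-- Extension of `v ∈ C[0,1]` to `ℝ` by projection onto `[0,1]`. -/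
def extC (v : C01) : ℝ → ℝ := fun t => v (Set.projIcc 0 1 (by norm_num) t)

open Finset (range sum_congr mem_range sum_range_sub mul_sum sum_comm sum_le_sum
  abs_sum_le_sum_abs sum_sub_distrib)

def rsSum (f A : ℝ → ℝ) (n : ℕ) (t ξ : ℕ → ℝ) : ℝ :=
  ∑ i ∈ range n, f (ξ i) * (A (t (i + 1)) - A (t i))

structure IsTaggedPartition (δ : ℝ) (n : ℕ) (t ξ : ℕ → ℝ) : Prop where
  left : t 0 = 0
  right : t n = 1
  le_succ : ∀ i < n, t i ≤ t (i + 1)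
  mesh_le : ∀ i < n, t (i + 1) - t i ≤ δ
  tag_mem : ∀ i < n, ξ i ∈ Icc (t i) (t (i + 1))

lemma isRSIntegral_iff {f A : ℝ → ℝ} {I : ℝ} :
    IsRSIntegral f A I ↔ ∀ ε > 0, ∃ δ > 0, ∀ n t ξ,
      IsTaggedPartition δ n t ξ → |rsSum f A n t ξ - I| ≤ ε := by
  refine forall₂_congr fun ε _ => exists_congr fun δ => and_congr_right fun _ =>
    forall_congr' fun n => forall₂_congr fun t ξ => ⟨fun h hP => ?_, fun h _ h0 h1 hP => ?_⟩
  · refine h (Nat.pos_of_ne_zero ?_) hP.left hP.right fun i hi =>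
      ⟨hP.le_succ i hi, hP.mesh_le i hi, hP.tag_mem i hi⟩
    rintro rfl
    exact zero_ne_one (hP.left.symm.trans hP.right)
  · exact h ⟨h0, h1, fun i hi => (hP i hi).1, fun i hi => (hP i hi).2.1, fun i hi => (hP i hi).2.2⟩

namespace IsTaggedPartition

variable {δ : ℝ} {n : ℕ} {t ξ : ℕ → ℝ}

lemma monotoneOn (hP : IsTaggedPartition δ n t ξ) : MonotoneOn t (Iic n) :=
  monotoneOn_of_le_succ ordConnected_Iic fun i _ _ hi => hP.le_succ i (Order.succ_le_iff.1 hi)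

lemma mem_Icc (hP : IsTaggedPartition δ n t ξ) {i : ℕ} (hi : i ≤ n) : t i ∈ Icc 0 1 :=
  ⟨hP.left ▸ hP.monotoneOn (Nat.zero_le n) hi (Nat.zero_le i),
    hP.right ▸ hP.monotoneOn hi (mem_Iic.2 le_rfl) hi⟩

lemma tag_mem_Icc (hP : IsTaggedPartition δ n t ξ) {i : ℕ} (hi : i < n) : ξ i ∈ Icc 0 1 :=
  ⟨(hP.mem_Icc hi.le).1.trans (hP.tag_mem i hi).1, (hP.tag_mem i hi).2.trans (hP.mem_Icc hi).2⟩

lemma mono (hP : IsTaggedPartition δ n t ξ) {δ' : ℝ} (h : δ ≤ δ') : IsTaggedPartition δ' n t ξ :=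
  { hP with mesh_le := fun i hi => (hP.mesh_le i hi).trans h }

end IsTaggedPartition

def uniformPartition (N i : ℕ) : ℝ := i / (N + 1)

lemma isTaggedPartition_uniformPartition {δ : ℝ} {N : ℕ} (h : 1 / ((N : ℝ) + 1) ≤ δ) :
    IsTaggedPartition δ (N + 1) (uniformPartition N) (uniformPartition N) := by
  have hN : (0 : ℝ) < N + 1 := by positivity
  have hstep : ∀ i : ℕ, uniformPartition N (i + 1) - uniformPartition N i = 1 / (N + 1) := by
    intro i; simp only [uniformPartition]; push_cast; ring
  refine ⟨by simp [uniformPartition], by simp [uniformPartition, hN.ne'], fun i _ => ?_,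
    fun i _ => (hstep i).trans_le h, fun i _ => ⟨le_rfl, ?_⟩⟩ <;>
  · linarith [hstep i, one_div_pos.2 hN]

lemma eventually_isTaggedPartition_uniformPartition {δ : ℝ} (hδ : 0 < δ) :
    ∀ᶠ N in atTop, IsTaggedPartition δ (N + 1) (uniformPartition N) (uniformPartition N) :=
  (tendsto_one_div_add_atTop_nhds_zero_nat.eventually (eventually_le_nhds hδ)).mono
    fun _ => isTaggedPartition_uniformPartition

def IsVariationMajorant (A W : ℝ → ℝ) : Prop :=
  ∀ x ∈ Icc (0 : ℝ) 1, ∀ y ∈ Icc (0 : ℝ) 1, x ≤ y → |A y - A x| ≤ W y - W x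

lemma BoundedVariationOn.isVariationMajorant {A : ℝ → ℝ} (hA : BoundedVariationOn A (Icc 0 1)) :
    IsVariationMajorant A (variationOnFromTo A (Icc 0 1) 0) := fun _ hx _ hy hxy =>
  variationOnFromTo.abs_sub_le_sub_of_le hA.locallyBoundedVariationOn
    (left_mem_Icc.2 zero_le_one) hx hy hxy

/-- The increment of `A` over `[a, b] ∩ [c, d]`, or `0` if the intersection is empty. -/
def overlapIncr (A : ℝ → ℝ) (a b c d : ℝ) : ℝ :=
  A (max (min b d) (max a c)) - A (max a c)

section overlapIncr

variable (A : ℝ → ℝ) {a b c d : ℝ}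

lemma overlapIncr_comm (a b c d : ℝ) : overlapIncr A a b c d = overlapIncr A c d a b := by
  simp only [overlapIncr, min_comm b d, max_comm a c]

lemma overlapIncr_of_lt (h : min b d < max a c) : overlapIncr A a b c d = 0 := by
  rw [overlapIncr, max_eq_right h.le, sub_self]

lemma overlapIncr_eq_clamp (hab : a ≤ b) (hcd : c ≤ d) :
    overlapIncr A a b c d = A (max a (min b d)) - A (max a (min b c)) := by
  rcases le_or_gt c b with hcb | hbc
  · rw [overlapIncr, min_eq_right hcb, ← max_assoc,
      max_eq_left (le_max_of_le_left (le_min hcb hcd)), max_comm]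
  · rw [overlapIncr, min_eq_left (hbc.le.trans hcd), min_eq_left hbc.le,
      max_eq_right (hab.trans hbc.le), max_eq_right hbc.le, sub_self, sub_self]

lemma sum_overlapIncr {δ : ℝ} {m : ℕ} {s η : ℕ → ℝ} (hQ : IsTaggedPartition δ m s η)
    (hab : a ≤ b) (ha : 0 ≤ a) (hb : b ≤ 1) :
    ∑ j ∈ range m, overlapIncr A a b (s j) (s (j + 1)) = A b - A a := by
  rw [sum_congr rfl fun j hj => overlapIncr_eq_clamp A hab (hQ.le_succ j (mem_range.1 hj)),
    sum_range_sub (fun j => A (max a (min b (s j)))), hQ.left, hQ.right, min_eq_left hb,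
    max_eq_right hab, min_eq_right (ha.trans hab), max_eq_left ha]

lemma abs_overlapIncr_le {W : ℝ → ℝ} (hW : IsVariationMajorant A W) (ha : a ∈ Icc 0 1)
    (hb : b ∈ Icc 0 1) (hc : c ∈ Icc 0 1) :
    |overlapIncr A a b c d| ≤ overlapIncr W a b c d :=
  hW _ ⟨le_max_of_le_left ha.1, max_le ha.2 hc.2⟩ _
    ⟨le_max_of_le_right (le_max_of_le_left ha.1),
      max_le (min_le_of_left_le hb.2) (max_le ha.2 hc.2)⟩
    (le_max_right _ _)

end overlapIncr

section RiemannStieltjes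

variable {f A W : ℝ → ℝ} {δ : ℝ} {n m : ℕ} {t ξ s η : ℕ → ℝ}

lemma rsSum_eq_sum_sum_overlapIncr (hP : IsTaggedPartition δ n t ξ)
    (hQ : IsTaggedPartition δ m s η) :
    rsSum f A n t ξ = ∑ i ∈ range n, ∑ j ∈ range m,
      f (ξ i) * overlapIncr A (t i) (t (i + 1)) (s j) (s (j + 1)) := by
  refine sum_congr rfl fun i hi => ?_
  have hi := mem_range.1 hi
  rw [← mul_sum, sum_overlapIncr A hQ (hP.le_succ i hi) (hP.mem_Icc hi.le).1 (hP.mem_Icc hi).2]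

/-- Both sums are compared with the sum over their common refinement, whose pieces are the
overlaps `[t i, t (i + 1)] ∩ [s j, s (j + 1)]`; on a nonempty overlap the tags `ξ i`, `η j`
are `2 δ`-close. -/
lemma abs_rsSum_sub_rsSum_le (hW : IsVariationMajorant A W) {ε : ℝ}
    (hf : ∀ x ∈ Icc (0 : ℝ) 1, ∀ y ∈ Icc (0 : ℝ) 1, |x - y| ≤ 2 * δ → |f x - f y| ≤ ε)
    (hP : IsTaggedPartition δ n t ξ) (hQ : IsTaggedPartition δ m s η) :
    |rsSum f A n t ξ - rsSum f A m s η| ≤ ε * (W 1 - W 0) := by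
  set e : (ℝ → ℝ) → ℕ → ℕ → ℝ := fun B i j => overlapIncr B (t i) (t (i + 1)) (s j) (s (j + 1))
  have hterm : ∀ i < n, ∀ j < m, |(f (ξ i) - f (η j)) * e A i j| ≤ ε * e W i j := by
    intro i hi j hj
    rcases lt_or_ge (min (t (i + 1)) (s (j + 1))) (max (t i) (s j)) with hdisj | hmeet
    · simp [e, overlapIncr_of_lt _ hdisj]
    obtain ⟨⟨-, hts⟩, hst, -⟩ := le_min_iff.1 hmeet |>.imp max_le_iff.1 max_le_iff.1
    have hclose : |ξ i - η j| ≤ 2 * δ := by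
      obtain ⟨hξ₀, hξ₁⟩ := hP.tag_mem i hi
      obtain ⟨hη₀, hη₁⟩ := hQ.tag_mem j hj
      have := hP.mesh_le i hi; have := hQ.mesh_le j hj
      rw [abs_le]; constructor <;> linarith
    have hfε := hf _ (hP.tag_mem_Icc hi) _ (hQ.tag_mem_Icc hj) hclose
    rw [abs_mul]
    exact mul_le_mul hfε (abs_overlapIncr_le A hW (hP.mem_Icc hi.le) (hP.mem_Icc hi)
      (hQ.mem_Icc hj.le)) (abs_nonneg _) ((abs_nonneg _).trans hfε)
  calc |rsSum f A n t ξ - rsSum f A m s η|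
      = |∑ i ∈ range n, ∑ j ∈ range m, (f (ξ i) - f (η j)) * e A i j| := by
        have hQP : rsSum f A m s η = ∑ i ∈ range n, ∑ j ∈ range m, f (η j) * e A i j := by
          rw [rsSum_eq_sum_sum_overlapIncr hQ hP, sum_comm]
          simp only [e, overlapIncr_comm A (s _) (s (_ + 1))]
        rw [rsSum_eq_sum_sum_overlapIncr hP hQ, hQP, ← sum_sub_distrib]
        simp only [e, ← sum_sub_distrib, sub_mul]
    _ ≤ ∑ i ∈ range n, ∑ j ∈ range m, ε * e W i j :=
        (abs_sum_le_sum_abs _ _).trans <| sum_le_sum fun i hi =>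
          (abs_sum_le_sum_abs _ _).trans <| sum_le_sum fun j hj =>
            hterm i (mem_range.1 hi) j (mem_range.1 hj)
    _ = ε * (W 1 - W 0) := by
        simp only [← mul_sum, ← hP.left, ← hP.right, ← sum_range_sub (fun i => W (t i))]
        congr 1
        refine sum_congr rfl fun i hi => ?_
        have hi := mem_range.1 hi
        exact sum_overlapIncr W hQ (hP.le_succ i hi) (hP.mem_Icc hi.le).1 (hP.mem_Icc hi).2

lemma abs_rsSum_le (hW : IsVariationMajorant A W) (hP : IsTaggedPartition δ n t ξ) {M : ℝ}
    (hf : ∀ x ∈ Icc (0 : ℝ) 1, |f x| ≤ M) : |rsSum f A n t ξ| ≤ M * (W 1 - W 0) := by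
  calc |rsSum f A n t ξ| ≤ ∑ i ∈ range n, M * (W (t (i + 1)) - W (t i)) := by
        refine (abs_sum_le_sum_abs _ _).trans (sum_le_sum fun i hi => ?_)
        have hi := mem_range.1 hi
        have hfM := hf _ (hP.tag_mem_Icc hi)
        rw [abs_mul]
        exact mul_le_mul hfM (hW _ (hP.mem_Icc hi.le) _ (hP.mem_Icc hi) (hP.le_succ i hi))
          (abs_nonneg _) ((abs_nonneg _).trans hfM)
    _ = M * (W 1 - W 0) := by
        rw [← mul_sum, sum_range_sub (fun i => W (t i)), hP.left, hP.right]

lemma rsSum_sub_rsSum {f' : ℝ → ℝ} :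
    rsSum f A n t ξ - rsSum f' A n t ξ = rsSum (fun x => f x - f' x) A n t ξ := by
  simp only [rsSum, ← sum_sub_distrib, sub_mul]

lemma exists_forall_abs_rsSum_sub_rsSum_le (hf : ContinuousOn f (Icc 0 1))
    (hW : IsVariationMajorant A W) {ε : ℝ} (hε : 0 < ε) :
    ∃ δ > 0, ∀ {n t ξ m s η}, IsTaggedPartition δ n t ξ → IsTaggedPartition δ m s η →
      |rsSum f A n t ξ - rsSum f A m s η| ≤ ε := by
  set V := W 1 - W 0
  have hV : 0 ≤ V := (abs_nonneg _).trans (hW 0 (left_mem_Icc.2 zero_le_one) 1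
    (right_mem_Icc.2 zero_le_one) zero_le_one)
  obtain ⟨δ, hδ, hfδ⟩ := Metric.uniformContinuousOn_iff_le.1
    (isCompact_Icc.uniformContinuousOn_of_continuous hf) (ε / (V + 1)) (by positivity)
  refine ⟨δ / 2, by positivity, fun hP hQ => ?_⟩
  calc _ ≤ ε / (V + 1) * V := abs_rsSum_sub_rsSum_le hW
          (fun x hx y hy hxy => hfδ x hx y hy (by rw [Real.dist_eq]; linarith))
          hP hQ
    _ ≤ ε := by rw [div_mul_eq_mul_div, div_le_iff₀ (by positivity)]; nlinarith

lemma exists_isRSIntegral (hf : ContinuousOn f (Icc 0 1)) (hW : IsVariationMajorant A W) :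
    ∃ I, IsRSIntegral f A I := by
  set S : ℕ → ℝ := fun N => rsSum f A (N + 1) (uniformPartition N) (uniformPartition N)
  have hS : CauchySeq S := Metric.cauchySeq_iff'.2 fun ε hε => by
    obtain ⟨δ, hδ, hcomp⟩ := exists_forall_abs_rsSum_sub_rsSum_le hf hW (half_pos hε)
    obtain ⟨N, hN⟩ := eventually_atTop.1 (eventually_isTaggedPartition_uniformPartition hδ)
    exact ⟨N, fun k hk => (hcomp (hN k hk) (hN N le_rfl)).trans_lt (half_lt_self hε)⟩
  obtain ⟨I, hI⟩ := cauchySeq_tendsto_of_complete hS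
  refine ⟨I, isRSIntegral_iff.2 fun ε hε => ?_⟩
  obtain ⟨δ, hδ, hcomp⟩ := exists_forall_abs_rsSum_sub_rsSum_le hf hW hε
  exact ⟨δ, hδ, fun n t ξ hP => le_of_tendsto (tendsto_const_nhds.sub hI).abs
    ((eventually_isTaggedPartition_uniformPartition hδ).mono fun N hN => hcomp hP hN)⟩

lemma IsRSIntegral.abs_sub_le (hW : IsVariationMajorant A W) {f' : ℝ → ℝ} {I I' M : ℝ}
    (h : IsRSIntegral f A I) (h' : IsRSIntegral f' A I')
    (hM : ∀ x ∈ Icc (0 : ℝ) 1, |f x - f' x| ≤ M) : |I - I'| ≤ M * (W 1 - W 0) := by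
  refine le_of_forall_pos_le_add fun ε hε => ?_
  obtain ⟨δ, hδ, hI⟩ := isRSIntegral_iff.1 h (ε / 2) (half_pos hε)
  obtain ⟨δ', hδ', hI'⟩ := isRSIntegral_iff.1 h' (ε / 2) (half_pos hε)
  obtain ⟨N, hN⟩ := exists_nat_one_div_lt (lt_min hδ hδ')
  have hP := isTaggedPartition_uniformPartition hN.le
  have h₁ := hI _ _ _ (hP.mono (min_le_left δ δ'))
  have h₂ := hI' _ _ _ (hP.mono (min_le_right δ δ'))
  have h₃ := abs_rsSum_le hW hP hM
  rw [← rsSum_sub_rsSum] at h₃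
  rw [abs_le] at h₁ h₂ h₃ ⊢
  constructor <;> linarith

end RiemannStieltjes

def rsIntegral (f A : ℝ → ℝ) : ℝ := Classical.epsilon (IsRSIntegral f A)

lemma isRSIntegral_rsIntegral {f A : ℝ → ℝ} (hf : ContinuousOn f (Icc 0 1))
    (hA : BoundedVariationOn A (Icc 0 1)) : IsRSIntegral f A (rsIntegral f A) :=
  Classical.epsilon_spec (exists_isRSIntegral hf hA.isVariationMajorant)

section psiQInv

variable {q : ℝ}

lemma psiQInv_of_nonneg (hq : 1 < q) {x : ℝ} (hx : 0 ≤ x) : psiQInv q x = x ^ (q - 1)⁻¹ := by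
  have hr : (q - 1)⁻¹ ≠ 0 := inv_ne_zero (sub_pos.2 hq).ne'
  rcases hx.eq_or_lt with rfl | hx
  · simp [psiQInv, Real.zero_rpow hr]
  rw [psiQInv, abs_of_pos hx, ← Real.rpow_add_one hx.ne']
  congr 1
  field_simp [(sub_pos.2 hq).ne']
  ring

lemma psiQInv_neg (q x : ℝ) : psiQInv q (-x) = -psiQInv q x := by
  simp [psiQInv]

lemma abs_psiQInv (hq : 1 < q) (x : ℝ) : |psiQInv q x| = |x| ^ (q - 1)⁻¹ := by
  rcases le_total 0 x with hx | hx
  · rw [psiQInv_of_nonneg hq hx, abs_of_nonneg hx, abs_of_nonneg (Real.rpow_nonneg hx _)]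
  · rw [← neg_neg x, psiQInv_neg, abs_neg, psiQInv_of_nonneg hq (neg_nonneg.2 hx), abs_neg,
      abs_of_nonneg (neg_nonneg.2 hx), abs_of_nonneg (Real.rpow_nonneg (neg_nonneg.2 hx) _)]

lemma strictMono_psiQInv (hq : 1 < q) : StrictMono (psiQInv q) :=
  strictMono_of_odd_strictMonoOn_nonneg (psiQInv_neg q) <|
    (Real.strictMonoOn_rpow_Ici_of_exponent_pos (inv_pos.2 (sub_pos.2 hq))).congr
      fun _ hx => (psiQInv_of_nonneg hq hx).symm

lemma continuous_psiQInv (hq : 1 < q) : Continuous (psiQInv q) := by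
  refine continuous_iff_continuousAt.2 fun x => ?_
  rcases eq_or_ne x 0 with rfl | hx
  · have habs : Continuous fun y : ℝ => |y| ^ (q - 1)⁻¹ :=
      continuous_abs.rpow_const fun _ => Or.inr (inv_pos.2 (sub_pos.2 hq)).le
    have h0 := habs.tendsto 0
    rw [abs_zero, Real.zero_rpow (inv_ne_zero (sub_pos.2 hq).ne')] at h0
    rw [ContinuousAt, show psiQInv q 0 = 0 by simp [psiQInv], tendsto_zero_iff_norm_tendsto_zero]
    simpa only [Real.norm_eq_abs, abs_psiQInv hq] using h0
  · exact ((Real.continuousAt_rpow_const _ _ (Or.inl (abs_ne_zero.2 hx))).comp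
      continuous_abs.continuousAt).mul continuousAt_id

lemma tendsto_psiQInv_atTop (hq : 1 < q) : Tendsto (psiQInv q) atTop atTop :=
  (tendsto_rpow_atTop (inv_pos.2 (sub_pos.2 hq))).congr' <|
    (eventually_ge_atTop 0).mono fun _ hx => (psiQInv_of_nonneg hq hx).symm

lemma tendsto_psiQInv_atBot (hq : 1 < q) : Tendsto (psiQInv q) atBot atBot := by
  have h := tendsto_neg_atTop_atBot.comp ((tendsto_psiQInv_atTop hq).comp tendsto_neg_atBot_atTop)
  refine h.congr fun x => ?_
  simp [psiQInv_neg]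

end psiQInv

section IntegralCompSub

variable {ψ G : ℝ → ℝ}

lemma strictMono_integral_comp_sub (hψ : Continuous ψ) (hψ_mono : StrictMono ψ)
    (hG : Continuous G) : StrictMono fun c => ∫ s in (0 : ℝ)..1, ψ (c - G s) := fun c c' hc =>
  intervalIntegral.integral_lt_integral_of_continuousOn_of_le_of_exists_lt zero_lt_one
    (hψ.comp (continuous_const.sub hG)).continuousOn
    (hψ.comp (continuous_const.sub hG)).continuousOn
    (fun s _ => hψ_mono.monotone (by linarith)) ⟨0, by simp, hψ_mono (by linarith)⟩

lemma existsUnique_integral_comp_sub_eq (hψ : Continuous ψ) (hψ_mono : StrictMono ψ)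
    (hψ_top : Tendsto ψ atTop atTop) (hψ_bot : Tendsto ψ atBot atBot) (hG : Continuous G)
    (R : ℝ) : ∃! c, ∫ s in (0 : ℝ)..1, ψ (c - G s) = R := by
  obtain ⟨K, hK⟩ := (isCompact_Icc (a := (0 : ℝ)) (b := 1)).exists_bound_of_continuousOn
    hG.continuousOn
  have hint c : IntervalIntegrable (fun s => ψ (c - G s)) volume 0 1 :=
    (hψ.comp (continuous_const.sub hG)).intervalIntegrable 0 1
  have hlower c : ψ (c - K) ≤ ∫ s in (0 : ℝ)..1, ψ (c - G s) := by
    simpa using intervalIntegral.integral_mono_on zero_le_one intervalIntegrable_const (hint c)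
      fun s hs => hψ_mono.monotone (by linarith [(abs_le.1 (hK s hs)).2])
  have hupper c : ∫ s in (0 : ℝ)..1, ψ (c - G s) ≤ ψ (c + K) := by
    simpa using intervalIntegral.integral_mono_on zero_le_one (hint c) intervalIntegrable_const
      fun s hs => hψ_mono.monotone (by linarith [(abs_le.1 (hK s hs)).1])
  have hcont : Continuous fun c => ∫ s in (0 : ℝ)..1, ψ (c - G s) :=
    intervalIntegral.continuous_parametric_intervalIntegral_of_continuous' (by fun_prop) 0 1
  obtain ⟨c, hc⟩ := hcont.surjective
    (tendsto_atTop_mono hlower (hψ_top.comp (tendsto_atTop_add_const_right _ _ tendsto_id)))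
    (tendsto_atBot_mono hupper (hψ_bot.comp (tendsto_atBot_add_const_right _ _ tendsto_id))) R
  exact ⟨c, hc, fun c' hc' => (strictMono_integral_comp_sub hψ hψ_mono hG).injective
    (hc'.trans hc.symm)⟩

end IntegralCompSub

lemma continuous_of_strictMono_of_apply_eq {X : Type*} [TopologicalSpace X] {F : X → ℝ → ℝ}
    (hF : ∀ a, Continuous fun x => F x a) (hF_mono : ∀ x, StrictMono (F x)) {R c : X → ℝ}
    (hR : Continuous R) (hc : ∀ x, F x (c x) = R x) : Continuous c := by
  refine continuous_iff_continuousAt.2 fun x₀ => tendsto_order.2 ⟨fun a ha => ?_, fun b hb => ?_⟩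
  · have h : F x₀ a < R x₀ := hc x₀ ▸ hF_mono x₀ ha
    filter_upwards [(hF a).continuousAt.eventually_lt hR.continuousAt h] with x hx
    exact (hF_mono x).lt_iff_lt.1 (hc x ▸ hx)
  · have h : R x₀ < F x₀ b := hc x₀ ▸ hF_mono x₀ hb
    filter_upwards [hR.continuousAt.eventually_lt (hF b).continuousAt h] with x hx
    exact (hF_mono x).lt_iff_lt.1 (hc x ▸ hx)

lemma continuous_extC (v : C01) : Continuous (extC v) := v.continuous.comp continuous_projIcc

lemma continuous_extC_uncurry : Continuous fun p : C01 × ℝ => extC p.1 p.2 :=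
  continuous_eval.comp (continuous_fst.prodMk
    ((continuous_projIcc (h := zero_le_one)).comp continuous_snd))

lemma continuous_rsIntegral_extC {A : ℝ → ℝ} (hA : BoundedVariationOn A (Icc 0 1)) :
    Continuous fun z : C01 => rsIntegral (extC z) A := by
  set W := variationOnFromTo A (Icc 0 1) 0
  have hI z := isRSIntegral_rsIntegral (continuous_extC z).continuousOn hA
  refine (LipschitzWith.of_dist_le' (K := W 1 - W 0) fun z z' => ?_).continuous
  rw [Real.dist_eq, mul_comm]
  exact (hI z).abs_sub_le hA.isVariationMajorant (hI z') fun x _ => by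
    rw [← Real.dist_eq]; exact ContinuousMap.dist_apply_le_dist _

lemma continuous_primitive_comp_extC {g : ℝ → ℝ → ℝ → ℝ}
    (hg : Continuous fun p : ℝ × ℝ × ℝ => g p.1 p.2.1 p.2.2) :
    Continuous fun x : (C01 × C01) × ℝ => ∫ τ in (0 : ℝ)..x.2, g τ (extC x.1.1 τ) (extC x.1.2 τ) :=
  intervalIntegral.continuous_parametric_primitive_of_continuous
    (f := fun (p : C01 × C01) τ => g τ (extC p.1 τ) (extC p.2 τ)) <|
    hg.comp (continuous_snd.prodMk
      ((continuous_extC_uncurry.comp (continuous_fst.fst.prodMk continuous_snd)).prodMk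
        (continuous_extC_uncurry.comp (continuous_fst.snd.prodMk continuous_snd))))

/-- Lemma 6: existence, uniqueness and continuity of the shooting constant
`c(u,v)` for the nonlocal problem. -/
theorem shooting_constant_exists_unique_continuous
    (q : ℝ) (hq : 1 < q)
    (g : ℝ → ℝ → ℝ → ℝ) (hg : Continuous fun p : ℝ × ℝ × ℝ => g p.1 p.2.1 p.2.2)
    (h₀ h₁ : ℝ → ℝ) (hh₀ : Continuous h₀) (hh₁ : Continuous h₁)
    (A₀ A₁ : ℝ → ℝ)
    (hA₀ : BoundedVariationOn A₀ (Set.Icc 0 1))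
    (hA₁ : BoundedVariationOn A₁ (Set.Icc 0 1)) :
    ∃ c : C01 → C01 → ℝ,
      (∀ u v : C01, ∃ I₀ I₁ : ℝ,
        IsRSIntegral (fun s => h₀ (extC v s)) A₀ I₀ ∧
        IsRSIntegral (fun s => h₁ (extC v s)) A₁ I₁ ∧
        (∫ s in (0:ℝ)..1,
            psiQInv q (c u v - ∫ τ in (0:ℝ)..s, g τ (extC u τ) (extC v τ)))
          = I₁ - I₀ ∧
        ∀ c' : ℝ,
          (∫ s in (0:ℝ)..1,
              psiQInv q (c' - ∫ τ in (0:ℝ)..s, g τ (extC u τ) (extC v τ)))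
            = I₁ - I₀ → c' = c u v) ∧
      Continuous fun p : C01 × C01 => c p.1 p.2 := by
  set G : C01 × C01 → ℝ → ℝ := fun p s => ∫ τ in (0 : ℝ)..s, g τ (extC p.1 τ) (extC p.2 τ)
  have hG : Continuous (Function.uncurry G) := continuous_primitive_comp_extC hg
  set R : C01 → ℝ := fun v =>
    rsIntegral (fun s => h₁ (extC v s)) A₁ - rsIntegral (fun s => h₀ (extC v s)) A₀
  have hR : Continuous R :=
    ((continuous_rsIntegral_extC hA₁).comp (ContinuousMap.continuous_postcomp ⟨h₁, hh₁⟩)).sub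
      ((continuous_rsIntegral_extC hA₀).comp (ContinuousMap.continuous_postcomp ⟨h₀, hh₀⟩))
  choose c hc hc_unique using fun p : C01 × C01 =>
    existsUnique_integral_comp_sub_eq (continuous_psiQInv hq) (strictMono_psiQInv hq)
      (tendsto_psiQInv_atTop hq) (tendsto_psiQInv_atBot hq) (hG.uncurry_left p) (R p.2)
  refine ⟨fun u v => c (u, v), fun u v => ⟨_, _, isRSIntegral_rsIntegral
      (hh₀.comp (continuous_extC v)).continuousOn hA₀, isRSIntegral_rsIntegral
      (hh₁.comp (continuous_extC v)).continuousOn hA₁, hc (u, v), hc_unique (u, v)⟩, ?_⟩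
  exact continuous_of_strictMono_of_apply_eq
    (fun a => intervalIntegral.continuous_parametric_intervalIntegral_of_continuous'
      (f := fun p s => psiQInv q (a - G p s)) ((continuous_psiQInv hq).comp
        (continuous_const.sub hG)) 0 1)
    (fun p => strictMono_integral_comp_sub (continuous_psiQInv hq) (strictMono_psiQInv hq)
      (hG.uncurry_left p))
    (hR.comp continuous_snd) hc

end
end
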